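/- Let σ ≥ 1 and δ ∈ (0, σ/2). Then there exist constants 0 < c₁ ≤ c₂ and r > 0 such that for all ξ ∈ ℝⁿ with 0 < |ξ| ≤ r, the real roots λ₁ ≥ λ₂ of λ² + |ξ|^{2δ}λ + |ξ|^{2σ} = 0 satisfy −c₂|ξ|^{2(σ−δ)} ≤ λ₁ ≤ −c₁|ξ|^{2(σ−δ)} and −c₂|ξ|^{2δ} ≤ λ₂ ≤ −c₁|ξ|^{2δ}. -/
import Mathlib


/-- For `σ ≥ 1`, `δ ∈ (0, σ/2)`, there are `0 < c₁ ≤ c₂` and `r > 0` such that for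
`0 < |ξ| ≤ r`, the real roots
`λ₁ = ½(−|ξ|^{2δ} + √(|ξ|^{4δ} − 4|ξ|^{2σ}))` and
`λ₂ = ½(−|ξ|^{2δ} − √(|ξ|^{4δ} − 4|ξ|^{2σ}))`
of `λ² + |ξ|^{2δ}λ + |ξ|^{2σ} = 0` satisfy
`−c₂|ξ|^{2(σ−δ)} ≤ λ₁ ≤ −c₁|ξ|^{2(σ−δ)}` and `−c₂|ξ|^{2δ} ≤ λ₂ ≤ −c₁|ξ|^{2δ}`. -/
theorem stmt_3 (n : ℕ) (σ δ : ℝ) (hσ : 1 ≤ σ) (hδ0 : 0 < δ) (hδ : δ < σ / 2) :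
    ∃ c₁ c₂ r : ℝ, 0 < c₁ ∧ c₁ ≤ c₂ ∧ 0 < r ∧
      ∀ ξ : EuclideanSpace ℝ (Fin n), 0 < ‖ξ‖ → ‖ξ‖ ≤ r →
        (let lam₁ : ℝ := (1 / 2) * (-(‖ξ‖ ^ (2 * δ)) + Real.sqrt (‖ξ‖ ^ (4 * δ) - 4 * ‖ξ‖ ^ (2 * σ)))
         let lam₂ : ℝ := (1 / 2) * (-(‖ξ‖ ^ (2 * δ)) - Real.sqrt (‖ξ‖ ^ (4 * δ) - 4 * ‖ξ‖ ^ (2 * σ)))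
         lam₂ ≤ lam₁ ∧
         lam₁ ^ 2 + ‖ξ‖ ^ (2 * δ) * lam₁ + ‖ξ‖ ^ (2 * σ) = 0 ∧
         lam₂ ^ 2 + ‖ξ‖ ^ (2 * δ) * lam₂ + ‖ξ‖ ^ (2 * σ) = 0 ∧
         -c₂ * ‖ξ‖ ^ (2 * (σ - δ)) ≤ lam₁ ∧ lam₁ ≤ -c₁ * ‖ξ‖ ^ (2 * (σ - δ)) ∧
         -c₂ * ‖ξ‖ ^ (2 * δ) ≤ lam₂ ∧ lam₂ ≤ -c₁ * ‖ξ‖ ^ (2 * δ)) := by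
  have he : 0 < 2 * σ - 4 * δ := by linarith
  refine ⟨1/2, 2, min 1 ((8:ℝ)⁻¹ ^ (1 / (2 * σ - 4 * δ))), by norm_num, by norm_num,
    lt_min one_pos (Real.rpow_pos_of_pos (by norm_num) _), ?_⟩
  intro ξ hx hr
  set x := ‖ξ‖ with hxdef
  have hx1 : x ≤ 1 := le_trans hr (min_le_left _ _)
  have hx8 : x ^ (2 * σ - 4 * δ) ≤ 8⁻¹ := by
    calc x ^ (2 * σ - 4 * δ)
        ≤ ((8:ℝ)⁻¹ ^ (1 / (2 * σ - 4 * δ))) ^ (2 * σ - 4 * δ) :=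
          Real.rpow_le_rpow hx.le (le_trans hr (min_le_right _ _)) he.le
      _ = 8⁻¹ := by
          rw [← Real.rpow_mul (by norm_num), one_div, inv_mul_cancel₀ he.ne', Real.rpow_one]
  have ha : 0 < x ^ (2 * δ) := Real.rpow_pos_of_pos hx _
  have hb : 0 < x ^ (2 * σ) := Real.rpow_pos_of_pos hx _
  have h4 : 0 < x ^ (4 * δ) := Real.rpow_pos_of_pos hx _
  have hsplit : x ^ (2 * σ) = x ^ (4 * δ) * x ^ (2 * σ - 4 * δ) := by
    rw [← Real.rpow_add hx]; ring_nf
  have hkey : 8 * x ^ (2 * σ) ≤ x ^ (4 * δ) := by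
    rw [hsplit]
    nlinarith [h4, hx8]
  have hsq : (x ^ (2 * δ)) ^ 2 = x ^ (4 * δ) := by
    rw [sq, ← Real.rpow_add hx]; ring_nf
  have hD : 0 ≤ x ^ (4 * δ) - 4 * x ^ (2 * σ) := by linarith
  have hprod : x ^ (2 * (σ - δ)) * x ^ (2 * δ) = x ^ (2 * σ) := by
    rw [← Real.rpow_add hx]; ring_nf
  have hc : 0 < x ^ (2 * (σ - δ)) := Real.rpow_pos_of_pos hx _
  set s := Real.sqrt (x ^ (4 * δ) - 4 * x ^ (2 * σ)) with hsdef
  set a := x ^ (2 * δ) with hadef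
  set b := x ^ (2 * σ) with hbdef
  set c := x ^ (2 * (σ - δ)) with hcdef
  set d := x ^ (4 * δ) with hddef
  -- now: hsq : a^2 = d, hD : 0 ≤ d - 4*b, hprod : c*a = b, hkey : 8*b ≤ d
  have hs0 : 0 ≤ s := Real.sqrt_nonneg _
  have hs2 : s ^ 2 = d - 4 * b := Real.sq_sqrt hD
  have hsle : s ≤ a := by nlinarith [hs2, hb, hs0, ha, hsq]
  have has : 0 < a + s := by linarith
  have hL1 : (1 / 2 * (-a + s)) * (a + s) = -2 * b := by
    linear_combination (1/2 : ℝ) * hs2 - (1/2 : ℝ) * hsq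
  refine ⟨?_, ?_, ?_, ?_, ?_, ?_, ?_⟩
  · show (1 / 2) * (-a - s) ≤ (1 / 2) * (-a + s)
    linarith
  · show (1 / 2 * (-a + s)) ^ 2 + a * (1 / 2 * (-a + s)) + b = 0
    linear_combination (1/4 : ℝ) * hs2 - (1/4 : ℝ) * hsq
  · show (1 / 2 * (-a - s)) ^ 2 + a * (1 / 2 * (-a - s)) + b = 0
    linear_combination (1/4 : ℝ) * hs2 - (1/4 : ℝ) * hsq
  · show -2 * c ≤ 1 / 2 * (-a + s)
    nlinarith [hL1, hprod, has, hs0, mul_nonneg hc.le hs0, mul_pos hc ha]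
  · show 1 / 2 * (-a + s) ≤ -(1/2) * c
    nlinarith [hL1, hprod, has, hs0, mul_nonneg hc.le (sub_nonneg.2 hsle), mul_pos hc ha]
  · show -2 * a ≤ 1 / 2 * (-a - s)
    linarith
  · show 1 / 2 * (-a - s) ≤ -(1/2) * a
    linarith
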